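/- Let H be a Hilbert space and A a positive compact operator on H. For p > 0, if one of the limits lim_{s→0⁺} s^p · N(s) or lim_{n→∞} (n+1) μ(n,A)^p exists, then both exist and they are equal, where N(s) = #{n : μ(n,A) > s} is the eigenvalue counting function of A above level s. -/

import Mathlib

open Filter

/-- The `n`-th singular value (approximation number)
`μ(n, T) = inf{‖T − R‖ : rank R ≤ n}` of an operator on a Hilbert space. -/
noncomputable def singVal {H : Type*} [NormedAddCommGroup H]
    [InnerProductSpace ℂ H] (T : H →L[ℂ] H) (n : ℕ) : ℝ :=
  sInf {c : ℝ | ∃ R : H →L[ℂ] H,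
    Module.rank ℂ (LinearMap.range (R : H →ₗ[ℂ] H)) ≤ (n : Cardinal) ∧
      c = ‖T - R‖}

/-- The eigenvalue counting function `N(s) = #{n : μ(n,A) > s}` of a positive
compact operator. -/
noncomputable def countingFn {H : Type*} [NormedAddCommGroup H]
    [InnerProductSpace ℂ H] (A : H →L[ℂ] H) (s : ℝ) : ℕ :=
  Set.ncard {n : ℕ | s < singVal A n}

/-!
Since the singular values `μ n` are antitone and, `A` being compact, tend to `0`, the set
`{n | s < μ n}` is the initial segment `[0, N(s))` for every `s > 0`. Hence
`μ (N s) ≤ s < μ (N s - 1)`, which squeezes `s ^ p * N s` between `μ (N s) ^ p * N s` and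
`N s * μ (N s - 1) ^ p`, two shifts of the sequence `(n + 1) * μ n ^ p`; conversely
`(n + 1) * μ n ^ p` is squeezed between the values of `s ^ p * N s` at `s = μ n` and just below
`μ n`. If `A` has finite rank, both expressions tend to `0`.
-/

open Topology

section FiniteRankApproximation

variable {𝕜 E F : Type*} [RCLike 𝕜] [NormedAddCommGroup E] [NormedSpace 𝕜 E]
  [NormedAddCommGroup F] [InnerProductSpace 𝕜 F]

theorem Submodule.norm_sub_starProjection_le (K : Submodule 𝕜 F) [K.HasOrthogonalProjection]
    (v : F) {y : F} (hy : y ∈ K) : ‖v - K.starProjection v‖ ≤ ‖v - y‖ := by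
  rw [K.starProjection_minimal]
  exact ciInf_le ⟨0, Set.forall_mem_range.2 fun _ => norm_nonneg _⟩ (⟨y, hy⟩ : K)

/-- The projection onto the span of a finite `ε`-net of `A '' closedBall 0 1` is `ε`-close to
`A`. -/
theorem IsCompactOperator.exists_finiteDimensional_range_norm_sub_le {A : E →L[𝕜] F}
    (hA : IsCompactOperator A) {ε : ℝ} (hε : 0 < ε) :
    ∃ R : E →L[𝕜] F, FiniteDimensional 𝕜 (LinearMap.range (R : E →ₗ[𝕜] F)) ∧ ‖A - R‖ ≤ ε := by
  obtain ⟨t, htf, hcover⟩ := Metric.totallyBounded_iff.1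
    ((IsCompactOperator.isCompact_closure_image_closedBall (f := (A : E →ₗ[𝕜] F)) hA
      1).totallyBounded.subset subset_closure) ε hε
  let K := Submodule.span 𝕜 t
  have : FiniteDimensional 𝕜 K := FiniteDimensional.span_of_finite 𝕜 htf
  refine ⟨K.starProjection ∘L A, Submodule.finiteDimensional_of_le (S₂ := K) ?_, ?_⟩
  · rintro _ ⟨x, rfl⟩
    exact K.starProjection_apply_mem _
  · refine ContinuousLinearMap.opNorm_le_of_unit_norm hε.le fun x hx => ?_
    obtain ⟨y, hyt, hy⟩ := Set.mem_iUnion₂.1 (hcover ⟨x, by simp [hx], rfl⟩)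
    calc ‖(A - K.starProjection ∘L A) x‖ = ‖A x - K.starProjection (A x)‖ := rfl
      _ ≤ ‖A x - y‖ := K.norm_sub_starProjection_le _ (Submodule.subset_span hyt)
      _ ≤ ε := (mem_ball_iff_norm.1 hy).le

end FiniteRankApproximation

section SingularValues

variable {H : Type*} [NormedAddCommGroup H] [InnerProductSpace ℂ H]

theorem singVal_le_norm_sub (T : H →L[ℂ] H) {R : H →L[ℂ] H} {n : ℕ}
    (hR : Module.rank ℂ (LinearMap.range (R : H →ₗ[ℂ] H)) ≤ n) : singVal T n ≤ ‖T - R‖ :=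
  csInf_le ⟨0, by rintro c ⟨R, -, rfl⟩; exact norm_nonneg _⟩ ⟨R, hR, rfl⟩

theorem singVal_nonneg (T : H →L[ℂ] H) (n : ℕ) : 0 ≤ singVal T n :=
  Real.sInf_nonneg (by rintro c ⟨R, -, rfl⟩; exact norm_nonneg _)

theorem singVal_antitone (T : H →L[ℂ] H) : Antitone (singVal T) := fun m n hmn =>
  csInf_le_csInf ⟨0, by rintro c ⟨R, -, rfl⟩; exact norm_nonneg _⟩ ⟨_, 0, by simp, rfl⟩
    fun _ ⟨R, hR, hc⟩ => ⟨R, hR.trans (by exact_mod_cast hmn), hc⟩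

theorem singVal_tendsto_zero {T : H →L[ℂ] H} (hT : IsCompactOperator T) :
    Tendsto (singVal T) atTop (𝓝 0) := by
  refine tendsto_order.2 ⟨fun a ha => Eventually.of_forall fun n =>
    ha.trans_le (singVal_nonneg T n), fun ε hε => ?_⟩
  obtain ⟨R, hR, hTR⟩ := hT.exists_finiteDimensional_range_norm_sub_le (half_pos hε)
  filter_upwards [eventually_ge_atTop (Module.finrank ℂ (LinearMap.range (R : H →ₗ[ℂ] H)))]
    with n hn
  calc singVal T n ≤ ‖T - R‖ :=
        singVal_le_norm_sub T (by rw [← Module.finrank_eq_rank]; exact_mod_cast hn)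
    _ < ε := hTR.trans_lt (half_lt_self hε)

end SingularValues

noncomputable def countAbove (μ : ℕ → ℝ) (s : ℝ) : ℕ :=
  {n | s < μ n}.ncard

section CountAbove

variable {μ : ℕ → ℝ} {s p : ℝ}

theorem lt_countAbove_iff (hμ : Antitone μ) (hs : ∃ n, μ n ≤ s) {k : ℕ} :
    k < countAbove μ s ↔ s < μ k := by
  have hfind : ∀ n, n < Nat.find hs ↔ s < μ n := fun n => by
    simp only [Nat.lt_find_iff, not_le]
    exact ⟨fun h => h n le_rfl, fun h m hm => h.trans_le (hμ hm)⟩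
  have hcount : countAbove μ s = Nat.find hs := by
    rw [countAbove, show {n | s < μ n} = Set.Iio (Nat.find hs) from Set.ext fun n => (hfind n).symm]
    simp
  rw [hcount, hfind]

theorem countAbove_le (hμ : Antitone μ) {n : ℕ} (h : μ n ≤ s) : countAbove μ s ≤ n :=
  not_lt.1 fun hn => ((lt_countAbove_iff hμ ⟨n, h⟩).1 hn).not_ge h

theorem apply_countAbove_le (hμ : Antitone μ) (hs : ∃ n, μ n ≤ s) : μ (countAbove μ s) ≤ s :=
  not_lt.1 fun h => (lt_irrefl _) ((lt_countAbove_iff hμ hs).2 h)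

end CountAbove

section Asymptotics

variable {μ : ℕ → ℝ} {p l : ℝ}

theorem tendsto_rpow_mul_countAbove_zero_of_apply_eq_zero (hμ : Antitone μ) {k : ℕ}
    (hk : μ k = 0) (hp : 0 < p) :
    Tendsto (fun s => s ^ p * (countAbove μ s : ℝ)) (𝓝[>] 0) (𝓝 0) := by
  have hrpow : Tendsto (fun s : ℝ => s ^ p * k) (𝓝[>] 0) (𝓝 0) := by
    simpa [Real.zero_rpow hp.ne'] using
      (((tendsto_id (x := 𝓝 (0 : ℝ))).rpow_const (Or.inr hp.le)).mul_const (k : ℝ)).mono_left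
        nhdsWithin_le_nhds
  refine squeeze_zero' ?_ ?_ hrpow <;> filter_upwards [self_mem_nhdsWithin] with s (hs : 0 < s)
  · positivity
  · have hcount : (countAbove μ s : ℝ) ≤ k := by exact_mod_cast countAbove_le hμ (hk ▸ hs.le)
    gcongr

theorem tendsto_succ_mul_rpow_zero_of_apply_eq_zero (hμ : Antitone μ) (hμ₀ : ∀ n, 0 ≤ μ n)
    {k : ℕ} (hk : μ k = 0) (hp : 0 < p) :
    Tendsto (fun n : ℕ => ((n : ℝ) + 1) * μ n ^ p) atTop (𝓝 0) :=
  tendsto_const_nhds.congr' <| (eventually_ge_atTop k).mono fun n hn => by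
    dsimp only
    rw [le_antisymm (hk ▸ hμ hn) (hμ₀ n), Real.zero_rpow hp.ne', mul_zero]

theorem rpow_mul_countAbove_apply_le (hμ : Antitone μ) {n : ℕ} (hn : 0 ≤ μ n) :
    μ n ^ p * countAbove μ (μ n) ≤ ((n : ℝ) + 1) * μ n ^ p := by
  have hcount : (countAbove μ (μ n) : ℝ) ≤ n + 1 := by
    exact_mod_cast (countAbove_le hμ le_rfl).trans n.le_succ
  rw [mul_comm]
  gcongr

theorem succ_mul_rpow_le_rpow_mul_countAbove (hμ : Antitone μ) {s : ℝ}
    (hs : ∃ m, μ m ≤ s) (hs₀ : 0 ≤ s) {n : ℕ} (hsn : s < μ n) :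
    ((n : ℝ) + 1) * s ^ p ≤ s ^ p * countAbove μ s := by
  have hcount : (n : ℝ) + 1 ≤ countAbove μ s := by
    exact_mod_cast (lt_countAbove_iff hμ hs).2 hsn
  rw [mul_comm]
  gcongr

theorem rpow_mul_countAbove_le_pred (hμ : Antitone μ) (hp : 0 ≤ p) {s : ℝ}
    (hs : ∃ m, μ m ≤ s) (hs₀ : 0 ≤ s) (hpos : 0 < countAbove μ s) :
    s ^ p * countAbove μ s ≤ ((countAbove μ s - 1 : ℕ) + 1 : ℝ) * μ (countAbove μ s - 1) ^ p := by
  have hlt : s < μ (countAbove μ s - 1) := (lt_countAbove_iff hμ hs).1 (Nat.sub_one_lt hpos.ne')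
  rw [Nat.cast_pred hpos, sub_add_cancel, mul_comm]
  gcongr

theorem apply_countAbove_rpow_mul_le (hμ : Antitone μ) (hμ₀ : ∀ n, 0 ≤ μ n) (hp : 0 ≤ p)
    {s : ℝ} (hs : ∃ m, μ m ≤ s) :
    μ (countAbove μ s) ^ p * countAbove μ s ≤ s ^ p * countAbove μ s := by
  gcongr
  · exact hμ₀ _
  · exact apply_countAbove_le hμ hs

theorem tendsto_succ_mul_rpow_of_tendsto_rpow_mul_countAbove (hμ : Antitone μ)
    (hpos : ∀ n, 0 < μ n) (hlim : Tendsto μ atTop (𝓝 0)) (hp : 0 < p)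
    (h : Tendsto (fun s => s ^ p * (countAbove μ s : ℝ)) (𝓝[>] 0) (𝓝 l)) :
    Tendsto (fun n : ℕ => ((n : ℝ) + 1) * μ n ^ p) atTop (𝓝 l) := by
  -- Probe the counting function just below `μ n`, at `r n * μ n` with `r n = (n + 1) / (n + 2)`.
  set r : ℕ → ℝ := fun n => ((n : ℝ) + 1) / ((n : ℝ) + 1 + 1)
  have hr : Tendsto r atTop (𝓝 1) := by
    refine ((tendsto_natCast_div_add_atTop (1 : ℝ)).comp (tendsto_add_atTop_nat 1)).congr
      fun n => ?_
    simp [r]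
  have hr_pos : ∀ n, 0 < r n := fun n => by positivity
  have hr_lt : ∀ n, r n < 1 := fun n => (div_lt_one (by positivity)).2 (lt_add_one _)
  have hμ_gt : Tendsto μ atTop (𝓝[>] 0) :=
    tendsto_nhdsWithin_iff.2 ⟨hlim, Eventually.of_forall hpos⟩
  have hrμ_gt : Tendsto (fun n => r n * μ n) atTop (𝓝[>] 0) :=
    tendsto_nhdsWithin_iff.2 ⟨by simpa using hr.mul hlim,
      Eventually.of_forall fun n => mul_pos (hr_pos n) (hpos n)⟩
  have hupper : Tendsto (fun n => (r n * μ n) ^ p * countAbove μ (r n * μ n) / r n ^ p)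
      atTop (𝓝 l) := by
    have := (h.comp hrμ_gt).div (hr.rpow_const (Or.inr hp.le)) (by simp)
    rwa [Real.one_rpow, div_one] at this
  refine tendsto_of_tendsto_of_tendsto_of_le_of_le (h.comp hμ_gt) hupper
    (fun n => rpow_mul_countAbove_apply_le hμ (hpos n).le) fun n => ?_
  have hs : 0 < r n * μ n := mul_pos (hr_pos n) (hpos n)
  have hsn : r n * μ n < μ n := mul_lt_of_lt_one_left (hpos n) (hr_lt n)
  rw [le_div_iff₀ (Real.rpow_pos_of_pos (hr_pos n) p)]
  calc ((n : ℝ) + 1) * μ n ^ p * r n ^ p = ((n : ℝ) + 1) * (r n * μ n) ^ p := by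
        rw [Real.mul_rpow (hr_pos n).le (hpos n).le]; ring
    _ ≤ _ := succ_mul_rpow_le_rpow_mul_countAbove hμ
        (hlim.eventually (ge_mem_nhds hs)).exists hs.le hsn

theorem tendsto_countAbove_atTop (hμ : Antitone μ) (hpos : ∀ n, 0 < μ n)
    (hlim : Tendsto μ atTop (𝓝 0)) : Tendsto (countAbove μ) (𝓝[>] 0) atTop := by
  refine tendsto_atTop.2 fun k => ?_
  filter_upwards [self_mem_nhdsWithin, mem_nhdsWithin_of_mem_nhds (eventually_lt_nhds (hpos k))]
    with s (hs : 0 < s) hsk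
  exact ((lt_countAbove_iff hμ (hlim.eventually (ge_mem_nhds hs)).exists).2 hsk).le

theorem tendsto_rpow_mul_countAbove_of_tendsto_succ_mul_rpow (hμ : Antitone μ)
    (hpos : ∀ n, 0 < μ n) (hlim : Tendsto μ atTop (𝓝 0)) (hp : 0 < p)
    (h : Tendsto (fun n : ℕ => ((n : ℝ) + 1) * μ n ^ p) atTop (𝓝 l)) :
    Tendsto (fun s => s ^ p * (countAbove μ s : ℝ)) (𝓝[>] 0) (𝓝 l) := by
  have hN := tendsto_countAbove_atTop hμ hpos hlim
  have hlower : Tendsto (fun n : ℕ => μ n ^ p * n) atTop (𝓝 l) := by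
    have := h.sub (hlim.rpow_const (Or.inr hp.le))
    rw [Real.zero_rpow hp.ne', sub_zero] at this
    exact this.congr fun n => by ring
  refine tendsto_of_tendsto_of_tendsto_of_le_of_le' (hlower.comp hN)
    (h.comp ((tendsto_sub_atTop_nat 1).comp hN)) ?_ ?_
  · filter_upwards [self_mem_nhdsWithin] with s (hs : 0 < s)
    exact apply_countAbove_rpow_mul_le hμ (fun n => (hpos n).le) hp.le
      (hlim.eventually (ge_mem_nhds hs)).exists
  · filter_upwards [self_mem_nhdsWithin, hN.eventually_gt_atTop 0] with s (hs : 0 < s) hN₀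
    exact rpow_mul_countAbove_le_pred hμ hp.le (hlim.eventually (ge_mem_nhds hs)).exists hs.le hN₀

theorem tendsto_rpow_mul_countAbove_iff (hμ : Antitone μ) (hlim : Tendsto μ atTop (𝓝 0))
    (hp : 0 < p) :
    Tendsto (fun s => s ^ p * (countAbove μ s : ℝ)) (𝓝[>] 0) (𝓝 l) ↔
      Tendsto (fun n : ℕ => ((n : ℝ) + 1) * μ n ^ p) atTop (𝓝 l) := by
  have hμ₀ : ∀ n, 0 ≤ μ n := hμ.le_of_tendsto hlim
  by_cases hzero : ∃ k, μ k = 0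
  · obtain ⟨k, hk⟩ := hzero
    have hf := tendsto_rpow_mul_countAbove_zero_of_apply_eq_zero hμ hk hp
    have hg := tendsto_succ_mul_rpow_zero_of_apply_eq_zero hμ hμ₀ hk hp
    exact ⟨fun h => tendsto_nhds_unique hf h ▸ hg, fun h => tendsto_nhds_unique hg h ▸ hf⟩
  · have hpos : ∀ n, 0 < μ n := fun n => (hμ₀ n).lt_of_ne fun h => hzero ⟨n, h.symm⟩
    exact ⟨tendsto_succ_mul_rpow_of_tendsto_rpow_mul_countAbove hμ hpos hlim hp,
      tendsto_rpow_mul_countAbove_of_tendsto_succ_mul_rpow hμ hpos hlim hp⟩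

end Asymptotics

theorem counting_eigenvalue_asymptotics_equiv_general {H : Type*} [NormedAddCommGroup H]
    [InnerProductSpace ℂ H]
    (p : ℝ) (hp : 0 < p) (A : H →L[ℂ] H)
    (hAc : IsCompactOperator A) :
    (∀ l : ℝ,
        Tendsto (fun s : ℝ => s ^ p * (countingFn A s : ℝ))
            (nhdsWithin 0 (Set.Ioi 0)) (nhds l) →
          Tendsto (fun n : ℕ => ((n : ℝ) + 1) * (singVal A n) ^ p)
            atTop (nhds l)) ∧
      (∀ l : ℝ,
        Tendsto (fun n : ℕ => ((n : ℝ) + 1) * (singVal A n) ^ p)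
            atTop (nhds l) →
          Tendsto (fun s : ℝ => s ^ p * (countingFn A s : ℝ))
            (nhdsWithin 0 (Set.Ioi 0)) (nhds l)) := by
  have hiff := fun l => tendsto_rpow_mul_countAbove_iff (l := l) (singVal_antitone A)
    (singVal_tendsto_zero hAc) hp
  exact ⟨fun l => (hiff l).1, fun l => (hiff l).2⟩

/-- Equivalence of counting-function and eigenvalue asymptotics for a positive
compact operator `A`: for `p > 0`, if one of the limits
`lim_{s→0⁺} s^p N(s)` or `lim_{n→∞} (n+1) μ(n,A)^p` exists, then both exist
and they are equal. -/
theorem counting_eigenvalue_asymptotics_equiv {H : Type*} [NormedAddCommGroup H]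
    [InnerProductSpace ℂ H] [CompleteSpace H]
    (p : ℝ) (hp : 0 < p) (A : H →L[ℂ] H)
    (hAc : IsCompactOperator A) (hApos : A.IsPositive) :
    (∀ l : ℝ,
        Tendsto (fun s : ℝ => s ^ p * (countingFn A s : ℝ))
            (nhdsWithin 0 (Set.Ioi 0)) (nhds l) →
          Tendsto (fun n : ℕ => ((n : ℝ) + 1) * (singVal A n) ^ p)
            atTop (nhds l)) ∧
      (∀ l : ℝ,
        Tendsto (fun n : ℕ => ((n : ℝ) + 1) * (singVal A n) ^ p)
            atTop (nhds l) →
          Tendsto (fun s : ℝ => s ^ p * (countingFn A s : ℝ))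
            (nhdsWithin 0 (Set.Ioi 0)) (nhds l)) :=
  counting_eigenvalue_asymptotics_equiv_general p hp A hAc
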